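/- For any half-Bernoulli distribution H_{k,μ} (point masses at k ∈ [0,1) and 1, mean μ), any sample size n ≥ 1, and any α ∈ (0,1), if Z denotes the order statistics of n i.i.d. samples from H_{k,μ} and m_α is defined as the (1-α)-quantile of m(Z,U) over uniform order statistics U, then P(m_α(Z) ≥ μ) ≥ 1 - α. -/

import Mathlib

open MeasureTheory

noncomputable section

def sortVec {n : ℕ} (x : Fin n → ℝ) : Fin n → ℝ := x ∘ Tuple.sort x

def unifCube (n : ℕ) : Measure (Fin n → ℝ) :=
  Measure.pi fun _ => volume.restrict (Set.Icc (0:ℝ) 1)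

def mInd {n : ℕ} (z u : Fin n → ℝ) : ℝ :=
  1 - ∑ i : Fin n, u i * ((Fin.snoc z 1 : Fin (n+1) → ℝ) i.succ - z i)

def quant (p : ℝ) {Ω : Type*} [MeasurableSpace Ω] (μ : Measure Ω) (Y : Ω → ℝ) : ℝ :=
  sInf {t : ℝ | ENNReal.ofReal p ≤ μ {ω | Y ω ≤ t}}

def mAlpha {n : ℕ} (α : ℝ) (z : Fin n → ℝ) : ℝ :=
  quant (1 - α) (unifCube n) (fun ω => mInd z (sortVec ω))

def betaCDF (a b : ℕ) (p : ℝ) : ℝ :=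
  (Real.Gamma ((a : ℝ) + b) / (Real.Gamma a * Real.Gamma b)) *
    ∫ t in (0:ℝ)..p, t ^ (a - 1) * (1 - t) ^ (b - 1)

def halfBern (k p : ℝ) : Measure ℝ :=
  ENNReal.ofReal p • Measure.dirac k + ENNReal.ofReal (1 - p) • Measure.dirac 1

def consComp (n : ℕ) (z u : ℕ → ℝ) (x : ℝ) : ℝ :=
  if 1 ≤ x then 1
  else ((((Finset.Icc 1 n).filter (fun i => z i ≤ x)).image u).max).unbotD 0

/-!
A sample from `H_{k,μ}ⁿ` is determined by the set `T` of coordinates equal to `k`; its order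
statistics are `#T` copies of `k` followed by ones, and for this `z` the statistic is
`m(z, U) = 1 - (1 - k) U₍#T₎`. Hence `m(z, U) < μ` exactly when fewer than `#T` of the uniforms
fall below `p = (1 - μ) / (1 - k)`. That count and `#T` are both `Binomial(n, p)`, so
`m_α(z) ≥ μ` as soon as `P(Bin(n, p) < #T) < 1 - α`, and for any integer-valued `N` with
distribution function `F` the event `F(N⁻) < 1 - α` has probability at least `1 - α`.
-/

open Finset
open scoped ENNReal

section Counting

theorem Monotone.lt_apply_iff_card_filter_le {α : Type*} [LinearOrder α] {n : ℕ}
    {v : Fin n → α} (hv : Monotone v) (i : Fin n) (c : α) :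
    c < v i ↔ #{j | v j ≤ c} ≤ i := by
  constructor
  · intro h
    have hsub : ({j | v j ≤ c} : Finset (Fin n)) ⊆ Iio i := fun j hj => by
      rw [mem_filter] at hj
      exact mem_Iio.2 (lt_of_not_ge fun hij => (hv hij).not_gt (hj.2.trans_lt h))
    simpa using card_le_card hsub
  · intro h
    by_contra! hle
    have hsub : Iic i ⊆ ({j | v j ≤ c} : Finset (Fin n)) := fun j hj =>
      mem_filter.2 ⟨mem_univ j, (hv (mem_Iic.1 hj)).trans hle⟩
    have := card_le_card hsub
    simp only [Fin.card_Iic] at this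
    omega

theorem card_filter_sortVec_le {n : ℕ} (ω : Fin n → ℝ) (c : ℝ) :
    #{i | sortVec ω i ≤ c} = #{i | ω i ≤ c} :=
  card_equiv (Tuple.sort ω) fun i => by simp only [mem_filter, mem_univ, true_and]; rfl

/-- With `w` the law of `N`, this says `P(F(N⁻) < q) ≥ q` for the distribution function `F`
of `N`: every `i` up to the first level where `F` reaches `q` qualifies. -/
theorem le_sum_filter_sum_lt {ι : Type*} (s : Finset ι) (w : ι → ℝ≥0∞) (N : ι → ℕ)
    {q : ℝ≥0∞} (hq : q ≤ ∑ i ∈ s, w i) :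
    q ≤ ∑ i ∈ s with ∑ j ∈ s with N j < N i, w j < q, w i := by
  classical
  rcases eq_zero_or_pos q with rfl | hq0
  · exact zero_le
  have hex : ∃ r, q ≤ ∑ j ∈ s with N j ≤ r, w j :=
    ⟨s.sup N, by rwa [filter_true_of_mem fun j hj => le_sup hj]⟩
  refine (Nat.find_spec hex).trans (sum_le_sum_of_subset fun i hi => ?_)
  rw [mem_filter] at hi ⊢
  refine ⟨hi.1, ?_⟩
  rcases Nat.eq_zero_or_pos (N i) with h0 | hpos
  · simpa [h0] using hq0
  · have hmin := Nat.find_min hex (show N i - 1 < Nat.find hex by omega)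
    rw [not_le] at hmin
    convert hmin using 3
    omega

end Counting

section ProductMeasure

variable {ι α : Type*} [Fintype ι] [DecidableEq ι]

theorem mem_univ_pi_ite_compl_iff {A : Set α} [DecidablePred (· ∈ A)] {T : Finset ι}
    {ω : ι → α} : ω ∈ Set.univ.pi (fun i => if i ∈ T then A else Aᶜ) ↔
      ({i | ω i ∈ A} : Finset ι) = T := by
  simp only [Set.mem_univ_pi, Finset.ext_iff, mem_filter, mem_univ, true_and]
  refine forall_congr' fun i => ?_
  by_cases hi : i ∈ T <;> simp [hi]

variable [MeasurableSpace α]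

theorem measure_pi_univ_pi_ite (ν : Measure α) [SigmaFinite ν] (T : Finset ι) (A B : Set α) :
    Measure.pi (fun _ : ι => ν) (Set.univ.pi fun i => if i ∈ T then A else B) =
      ν A ^ #T * ν B ^ #Tᶜ := by
  rw [Measure.pi_pi]
  simp [apply_ite ν, prod_ite, filter_not, compl_eq_univ_sdiff]

theorem measure_pi_setOf_filter_mem (ν : Measure α) [SigmaFinite ν] {A : Set α}
    [DecidablePred (· ∈ A)] (hA : MeasurableSet A) (S : Finset (Finset ι)) :
    Measure.pi (fun _ : ι => ν) {ω | ({i | ω i ∈ A} : Finset ι) ∈ S} =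
      ∑ T ∈ S, ν A ^ #T * ν Aᶜ ^ #Tᶜ := by
  have hunion : {ω : ι → α | ({i | ω i ∈ A} : Finset ι) ∈ S} =
      ⋃ T ∈ S, Set.univ.pi (fun i => if i ∈ T then A else Aᶜ) := by
    ext ω
    simp only [Set.mem_ofPred_eq, Set.mem_iUnion, mem_univ_pi_ite_compl_iff, exists_prop,
      exists_eq_right']
  rw [hunion, measure_biUnion_finset]
  · exact sum_congr rfl fun T _ => measure_pi_univ_pi_ite ν T A Aᶜ
  · intro T _ T' _ hne
    refine Set.disjoint_left.2 fun ω hω hω' => hne ?_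
    rw [mem_univ_pi_ite_compl_iff] at hω hω'
    rw [← hω, ← hω']
  · intro T _
    exact MeasurableSet.univ_pi fun i => by split_ifs <;> simp [hA]

end ProductMeasure

def binomWeight {ι : Type*} [Fintype ι] [DecidableEq ι] (p : ℝ) (T : Finset ι) : ℝ≥0∞ :=
  ENNReal.ofReal p ^ #T * ENNReal.ofReal (1 - p) ^ #Tᶜ

theorem sum_binomWeight {ι : Type*} [Fintype ι] [DecidableEq ι] {p : ℝ} (hp0 : 0 ≤ p)
    (hp1 : p ≤ 1) : ∑ T : Finset ι, binomWeight p T = 1 := by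
  have h := prod_add (fun _ : ι => ENNReal.ofReal p) (fun _ => ENNReal.ofReal (1 - p)) univ
  simp only [prod_const, powerset_univ, ← compl_eq_univ_sdiff] at h
  rw [← ENNReal.ofReal_add hp0 (by linarith), add_sub_cancel, ENNReal.ofReal_one, one_pow] at h
  exact h.symm

instance : IsProbabilityMeasure (volume.restrict (Set.Icc (0:ℝ) 1)) :=
  ⟨by simp⟩

instance (n : ℕ) : IsProbabilityMeasure (unifCube n) := by
  unfold unifCube; infer_instance

instance (k p : ℝ) : IsFiniteMeasure (halfBern k p) := ⟨by simp [halfBern]⟩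

theorem volume_restrict_Icc_Iic {p : ℝ} (hp1 : p ≤ 1) :
    volume.restrict (Set.Icc (0:ℝ) 1) (Set.Iic p) = ENNReal.ofReal p := by
  have h : Set.Iic p ∩ Set.Icc 0 1 = Set.Icc 0 p := by
    ext x; simp only [Set.mem_inter_iff, Set.mem_Iic, Set.mem_Icc]; grind
  rw [Measure.restrict_apply measurableSet_Iic, h, Real.volume_Icc, sub_zero]

theorem volume_restrict_Icc_Ioi {p : ℝ} (hp0 : 0 ≤ p) :
    volume.restrict (Set.Icc (0:ℝ) 1) (Set.Ioi p) = ENNReal.ofReal (1 - p) := by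
  have h : Set.Ioi p ∩ Set.Icc 0 1 = Set.Ioc p 1 := by
    ext x; simp only [Set.mem_inter_iff, Set.mem_Ioi, Set.mem_Icc, Set.mem_Ioc]; grind
  rw [Measure.restrict_apply measurableSet_Ioi, h, Real.volume_Ioc]

theorem halfBern_singleton_left {k : ℝ} (hk : k < 1) (p : ℝ) :
    halfBern k p {k} = ENNReal.ofReal p := by
  simp [halfBern, hk.ne]

theorem halfBern_singleton_one {k : ℝ} (hk : k < 1) (p : ℝ) :
    halfBern k p {1} = ENNReal.ofReal (1 - p) := by
  simp [halfBern, hk.ne]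

section SortedSample

variable {n : ℕ}

def stepVec (k : ℝ) (j : ℕ) : Fin n → ℝ := fun i => if (i : ℕ) < j then k else 1

def twoPointVec (k : ℝ) (T : Finset (Fin n)) : Fin n → ℝ := fun i => if i ∈ T then k else 1

theorem monotone_sortVec (ω : Fin n → ℝ) : Monotone (sortVec ω) := Tuple.monotone_sort ω

theorem twoPointVec_le_iff {k : ℝ} (hk : k < 1) {T : Finset (Fin n)} {i : Fin n} :
    twoPointVec k T i ≤ k ↔ i ∈ T := by
  by_cases hi : i ∈ T <;> simp [twoPointVec, hi, hk]

theorem sortVec_twoPointVec {k : ℝ} (hk : k < 1) (T : Finset (Fin n)) :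
    sortVec (twoPointVec k T) = stepVec k #T := by
  funext i
  have hval : sortVec (twoPointVec k T) i = k ∨ sortVec (twoPointVec k T) i = 1 := by
    by_cases hi : Tuple.sort (twoPointVec k T) i ∈ T <;> simp [sortVec, twoPointVec, hi]
  have hle : sortVec (twoPointVec k T) i ≤ k ↔ (i : ℕ) < #T := by
    rw [← not_lt, (monotone_sortVec _).lt_apply_iff_card_filter_le, card_filter_sortVec_le,
      not_le]
    simp only [twoPointVec_le_iff hk, filter_mem_eq_inter, univ_inter]
  unfold stepVec
  split_ifs with hi
  · exact le_antisymm (hle.2 hi) (hval.resolve_right fun h => by linarith [hle.2 hi]).ge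
  · exact hval.resolve_left fun h => hi (hle.1 h.le)

theorem snoc_stepVec_succ (k : ℝ) {j : ℕ} (hj : j ≤ n) (i : Fin n) :
    (Fin.snoc (stepVec k j) 1 : Fin (n + 1) → ℝ) i.succ =
      if (i : ℕ) + 1 < j then k else 1 := by
  simp only [Fin.snoc, stepVec, Fin.val_castLT, Fin.val_succ]
  split_ifs <;> first | rfl | omega

theorem mInd_stepVec_zero (k : ℝ) (u : Fin n → ℝ) : mInd (stepVec k 0) u = 1 := by
  simp [mInd, snoc_stepVec_succ k (Nat.zero_le n), stepVec]

theorem mInd_stepVec_succ (k : ℝ) {j : ℕ} (hj : j < n) (u : Fin n → ℝ) :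
    mInd (stepVec k (j + 1)) u = 1 - (1 - k) * u ⟨j, hj⟩ := by
  rw [mInd, sum_eq_single ⟨j, hj⟩]
  · simp only [snoc_stepVec_succ k hj, stepVec]
    split_ifs <;> first | omega | ring
  · intro i _ hi
    have hij : (i : ℕ) ≠ j := fun h => hi (Fin.ext h)
    simp only [snoc_stepVec_succ k hj, stepVec]
    split_ifs <;> first | omega | ring
  · simp

end SortedSample

theorem le_quant {Ω : Type*} [MeasurableSpace Ω] (ν : Measure Ω) [IsProbabilityMeasure ν]
    (Y : Ω → ℝ) {p a : ℝ} (hp : p < 1) (h : ν {ω | Y ω < a} < ENNReal.ofReal p) :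
    a ≤ quant p ν Y := by
  -- `sInf ∅ = 0` in `ℝ`, so the set defining the quantile has to be shown nonempty.
  have hne : ∃ t, ENNReal.ofReal p ≤ ν {ω | Y ω ≤ t} := by
    have hmono : Monotone fun m : ℕ => {ω | Y ω ≤ m} :=
      fun m m' hm ω (hω : Y ω ≤ m) => hω.trans (Nat.cast_le.2 hm)
    have hunion : ⋃ m : ℕ, {ω | Y ω ≤ m} = Set.univ :=
      Set.eq_univ_of_forall fun ω => Set.mem_iUnion.2 (exists_nat_ge (Y ω))
    have hlim := tendsto_measure_iUnion_atTop (μ := ν) hmono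
    rw [hunion, measure_univ] at hlim
    obtain ⟨m, hm⟩ := (hlim.eventually (eventually_ge_nhds (ENNReal.ofReal_lt_one.2 hp))).exists
    exact ⟨m, hm⟩
  refine le_csInf hne fun t ht => le_of_not_gt fun hta => ?_
  exact (ht.trans (measure_mono fun ω hω => lt_of_le_of_lt hω hta)).not_gt h

section Coverage

variable {n : ℕ}

theorem setOf_mInd_stepVec_sortVec_lt_subset {k μ : ℝ} (hk : k < 1) (hμ : μ ≤ 1) {j : ℕ}
    (hj : j ≤ n) :
    {ω : Fin n → ℝ | mInd (stepVec k j) (sortVec ω) < μ} ⊆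
      {ω | #{i | ω i ≤ (1 - μ) / (1 - k)} < j} := by
  intro ω hω
  rcases j with _ | j
  · rw [Set.mem_ofPred_eq, mInd_stepVec_zero] at hω
    linarith
  · rw [Set.mem_ofPred_eq, mInd_stepVec_succ k hj] at hω
    have hlt : (1 - μ) / (1 - k) < sortVec ω ⟨j, hj⟩ := by
      rw [div_lt_iff₀ (sub_pos.2 hk)]
      linarith
    rw [(monotone_sortVec ω).lt_apply_iff_card_filter_le, card_filter_sortVec_le] at hlt
    exact Nat.lt_succ_of_le hlt

theorem le_mAlpha_stepVec {α k μ : ℝ} (hα : 0 < α) (hk : k < 1) (hμ : μ ≤ 1) {j : ℕ}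
    (hj : j ≤ n)
    (h : unifCube n {ω | #{i | ω i ≤ (1 - μ) / (1 - k)} < j} < ENNReal.ofReal (1 - α)) :
    μ ≤ mAlpha α (stepVec (n := n) k j) :=
  le_quant _ _ (by linarith)
    ((measure_mono (setOf_mInd_stepVec_sortVec_lt_subset hk hμ hj)).trans_lt h)

theorem unifCube_card_filter_le_lt {p : ℝ} (hp0 : 0 ≤ p) (hp1 : p ≤ 1) (j : ℕ) :
    unifCube n {ω | #{i | ω i ≤ p} < j} =
      ∑ T : Finset (Fin n) with #T < j, binomWeight p T := by
  rw [unifCube]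
  have h := measure_pi_setOf_filter_mem (volume.restrict (Set.Icc (0:ℝ) 1)) measurableSet_Iic
    ({T | #T < j} : Finset (Finset (Fin n))) (A := Set.Iic p)
  simpa only [mem_filter, mem_univ, true_and, Set.mem_Iic, Set.compl_Iic,
    volume_restrict_Icc_Iic hp1, volume_restrict_Icc_Ioi hp0, binomWeight] using h

theorem measure_pi_halfBern_biUnion_twoPointVec {k : ℝ} (hk : k < 1) (p : ℝ)
    (S : Finset (Finset (Fin n))) :
    Measure.pi (fun _ => halfBern k p) (⋃ T ∈ S, {twoPointVec k T}) =
      ∑ T ∈ S, binomWeight p T := by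
  rw [measure_biUnion_finset]
  · refine sum_congr rfl fun T _ => ?_
    have hpi : ({twoPointVec k T} : Set (Fin n → ℝ)) =
        Set.univ.pi fun i => if i ∈ T then {k} else {1} := by
      rw [← Set.univ_pi_singleton]
      simp only [twoPointVec, apply_ite]
    rw [hpi, measure_pi_univ_pi_ite, halfBern_singleton_left hk, halfBern_singleton_one hk]
    rfl
  · intro T _ T' _ hne
    refine Set.disjoint_singleton.2 fun h => hne ?_
    ext i
    rw [← twoPointVec_le_iff hk, h, twoPointVec_le_iff hk]
  · exact fun T _ => measurableSet_singleton _

end Coverage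

theorem stmt9_general (n : ℕ) (α : ℝ) (hα : α ∈ Set.Ioo (0:ℝ) 1)
    (k μ : ℝ) (hk1 : k < 1) (hkμ : k ≤ μ) (hμ1 : μ ≤ 1) :
    ENNReal.ofReal (1 - α) ≤
      Measure.pi (fun _ : Fin n => halfBern k ((1 - μ) / (1 - k)))
        {ω | μ ≤ mAlpha α (sortVec ω)} := by
  set p := (1 - μ) / (1 - k)
  have hp0 : 0 ≤ p := div_nonneg (by linarith) (by linarith)
  have hp1 : p ≤ 1 := (div_le_one (by linarith)).2 (by linarith)
  set good : Finset (Finset (Fin n)) :=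
    {T | ∑ T' : Finset (Fin n) with #T' < #T, binomWeight p T' < ENNReal.ofReal (1 - α)}
  have hcover : ⋃ T ∈ good, {twoPointVec k T} ⊆ {ω | μ ≤ mAlpha α (sortVec ω)} := by
    refine Set.iUnion₂_subset fun T hT => Set.singleton_subset_iff.2 ?_
    rw [Set.mem_ofPred_eq, sortVec_twoPointVec hk1]
    refine le_mAlpha_stepVec hα.1 hk1 hμ1 (card_le_univ T |>.trans_eq (Fintype.card_fin n)) ?_
    rw [unifCube_card_filter_le_lt hp0 hp1]
    exact (mem_filter.1 hT).2
  calc ENNReal.ofReal (1 - α) ≤ ∑ T ∈ good, binomWeight p T :=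
        le_sum_filter_sum_lt univ _ card (by
          rw [sum_binomWeight hp0 hp1]
          exact ENNReal.ofReal_le_one.2 (by linarith [hα.1]))
    _ = _ := (measure_pi_halfBern_biUnion_twoPointVec hk1 p good).symm
    _ ≤ _ := measure_mono hcover

/-- Main theorem for half-Bernoulli distributions: the bound m_α has guaranteed coverage. -/
theorem stmt9 (n : ℕ) (hn : 1 ≤ n) (α : ℝ) (hα : α ∈ Set.Ioo (0:ℝ) 1)
    (k μ : ℝ) (hk0 : 0 ≤ k) (hk1 : k < 1) (hkμ : k ≤ μ) (hμ1 : μ ≤ 1) :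
    ENNReal.ofReal (1 - α) ≤
      Measure.pi (fun _ : Fin n => halfBern k ((1 - μ) / (1 - k)))
        {ω | μ ≤ mAlpha α (sortVec ω)} :=
  stmt9_general n α hα k μ hk1 hkμ hμ1
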